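/- Let C_1, ..., C_{d+1} be finite subsets of R^d such that 0 ∈ ch(C_i) for each i. Then there exist points c_1 ∈ C_1, ..., c_{d+1} ∈ C_{d+1} such that 0 ∈ ch({c_1, ..., c_{d+1}}). -/

import Mathlib

/-!
Among all colorful selections `g`, take one whose convex hull contains a point `x` of least
norm over all such hulls. If `x ≠ 0`, then `x` is the nearest point of a convex set to the
origin, so every point of that hull lies in the half-space `⟪x, ·⟫ ≥ ‖x‖²`, and `x` is a
positive combination of affinely independent vertices lying on the hyperplane
`⟪x, ·⟫ = ‖x‖²`. As this hyperplane misses the origin those vertices are linearly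
independent, hence at most `d` of them, and some color `i₀` is not used. Since
`0 ∈ ch(C i₀)`, some `c ∈ C i₀` has `⟪x, c⟫ ≤ 0`; swapping it in for `g i₀` keeps `x` in the
hull, and the segment from `x` towards `c` contains points of smaller norm, contradicting
minimality.
-/

open Function Module Set
open scoped RealInnerProductSpace

theorem exists_apply_nonpos_of_zero_mem_convexHull {V : Type*} [AddCommGroup V] [Module ℝ V]
    {s : Set V} (h : (0 : V) ∈ convexHull ℝ s) (f : V →ₗ[ℝ] ℝ) : ∃ c ∈ s, f c ≤ 0 := by
  by_contra! hpos
  have h0 : 0 < f 0 := convexHull_min hpos (convex_halfSpace_gt f.isLinear 0) h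
  exact h0.ne' (map_zero f)

theorem AffineIndependent.linearIndependent_of_apply_eq {k V ι : Type*} [Field k]
    [AddCommGroup V] [Module k V] {p : ι → V} (hp : AffineIndependent k p) (f : V →ₗ[k] k)
    {m : k} (hm : m ≠ 0) (hf : ∀ i, f (p i) = m) : LinearIndependent k p := by
  refine linearIndependent_iff'.2 fun s w hw => hp.eq_zero_of_sum_eq_zero ?_ hw
  have : (∑ i ∈ s, w i) * m = 0 := by simpa [hf, Finset.sum_mul] using congrArg f hw
  exact (mul_eq_zero.1 this).resolve_right hm

theorem exists_forall_subset_range_update {ι α : Type*} [Fintype ι] [DecidableEq ι]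
    {g : ι → α} {t : Finset α} (ht : ↑t ⊆ range g) (hcard : t.card < Fintype.card ι) :
    ∃ i₀, ∀ c, ↑t ⊆ range (update g i₀ c) := by
  choose σ hσ using fun y : t => ht y.2
  have hσ_not_surj : ¬ Surjective σ := fun hsurj =>
    (Fintype.card_le_of_surjective σ hsurj).not_gt (by simpa using hcard)
  obtain ⟨i₀, hi₀⟩ : ∃ i₀, ∀ y, σ y ≠ i₀ := by simpa [Surjective] using hσ_not_surj
  exact ⟨i₀, fun c y hy => ⟨σ ⟨y, hy⟩, by rw [update_of_ne (hi₀ _), hσ]⟩⟩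

variable {E : Type*} [NormedAddCommGroup E] [InnerProductSpace ℝ E]

theorem exists_mem_segment_norm_lt {x y : E} (h : ⟪x, y⟫ < ‖x‖ ^ 2) :
    ∃ z ∈ segment ℝ x y, ‖z‖ < ‖x‖ := by
  set a := ‖x‖ ^ 2 - ⟪x, y⟫
  set b := ‖y - x‖ ^ 2
  have ha : 0 < a := sub_pos.2 h
  have hb : 0 ≤ b := by positivity
  set θ := a / (a + b)
  have hθ : θ * (a + b) = a := div_mul_cancel₀ a (by positivity)
  have hθ0 : 0 < θ := by positivity
  refine ⟨x + θ • (y - x), ?_, ?_⟩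
  · rw [segment_eq_image']
    exact ⟨θ, ⟨hθ0.le, div_le_one_of_le₀ (by linarith) (by positivity)⟩, rfl⟩
  · have hsq : ‖x + θ • (y - x)‖ ^ 2 = ‖x‖ ^ 2 - θ * (2 * a - θ * b) := by
      rw [norm_add_sq_real, norm_smul, inner_smul_right, inner_sub_right,
        real_inner_self_eq_norm_sq, Real.norm_of_nonneg hθ0.le]
      ring
    have : θ * (2 * a - θ * b) > 0 := mul_pos hθ0 (by nlinarith)
    exact (pow_lt_pow_iff_left₀ (norm_nonneg _) (norm_nonneg _) two_ne_zero).1 (by linarith)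

theorem norm_sq_le_inner_of_forall_norm_le {K : Set E} (hK : Convex ℝ K) {x w : E}
    (hx : x ∈ K) (hw : w ∈ K) (hmin : ∀ v ∈ K, ‖x‖ ≤ ‖v‖) : ‖x‖ ^ 2 ≤ ⟪x, w⟫ := by
  by_contra! h
  obtain ⟨z, hz, hzx⟩ := exists_mem_segment_norm_lt h
  exact (hmin z (hK.segment_subset hx hw hz)).not_gt hzx

theorem exists_card_le_finrank_of_forall_norm_le [FiniteDimensional ℝ E] {s : Set E}
    {x : E} (hx : x ∈ convexHull ℝ s) (hx0 : x ≠ 0) (hmin : ∀ v ∈ convexHull ℝ s, ‖x‖ ≤ ‖v‖) :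
    ∃ t : Finset E, ↑t ⊆ s ∧ t.card ≤ finrank ℝ E ∧ x ∈ convexHull ℝ ↑t := by
  classical
  obtain ⟨ι, _, z, w, hzs, hz, hw0, hw1, hwz⟩ := eq_pos_convex_span_of_mem_convexHull hx
  have hle : ∀ i ∈ Finset.univ, w i * ‖x‖ ^ 2 ≤ w i * ⟪x, z i⟫ := fun i _ =>
    mul_le_mul_of_nonneg_left (norm_sq_le_inner_of_forall_norm_le (convex_convexHull ℝ s) hx
      (subset_convexHull ℝ s (hzs (mem_range_self i))) hmin) (hw0 i).le
  have hface : ∀ i, ⟪x, z i⟫ = ‖x‖ ^ 2 := by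
    have hsum : ∑ i, w i * ‖x‖ ^ 2 = ∑ i, w i * ⟪x, z i⟫ := by
      rw [← Finset.sum_mul, hw1, one_mul, ← real_inner_self_eq_norm_sq]
      nth_rw 2 [← hwz]
      simp only [inner_sum, real_inner_smul_right]
    intro i
    exact (mul_left_cancel₀ (hw0 i).ne'
      ((Finset.sum_eq_sum_iff_of_le hle).1 hsum i (Finset.mem_univ i))).symm
  have hli : LinearIndependent ℝ z :=
    hz.linearIndependent_of_apply_eq (innerₗ E x) (pow_ne_zero 2 (norm_ne_zero_iff.2 hx0)) hface
  refine ⟨Finset.univ.image z, by simpa using hzs,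
    Finset.card_image_le.trans (by simpa using hli.fintype_card_le_finrank), ?_⟩
  rw [← hwz]
  exact (convex_convexHull ℝ _).sum_mem (fun i _ => (hw0 i).le) hw1
    (fun i _ => subset_convexHull ℝ _ (by simp))

theorem exists_selection_forall_norm_le {ι : Type*} [Finite ι] [Nonempty ι]
    {C : ι → Finset E} (hC : ∀ i, (C i).Nonempty) :
    ∃ g : ι → E, (∀ i, g i ∈ C i) ∧ ∃ x ∈ convexHull ℝ (range g),
      ∀ g' : ι → E, (∀ i, g' i ∈ C i) → ∀ v ∈ convexHull ℝ (range g'), ‖x‖ ≤ ‖v‖ := by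
  set K := ⋃ g ∈ Set.univ.pi (fun i => (C i : Set E)), convexHull ℝ (range g)
  have hK : IsCompact K := (Set.Finite.pi fun i => (C i).finite_toSet).isCompact_biUnion
    fun g _ => (Set.finite_range g).isCompact_convexHull ℝ
  choose g₀ hg₀ using hC
  have hKne : K.Nonempty := ⟨g₀ (Classical.arbitrary ι), Set.mem_biUnion (x := g₀)
    (by simpa using hg₀) (subset_convexHull ℝ _ (mem_range_self _))⟩
  obtain ⟨x, hxK, hmin⟩ := hK.exists_isMinOn hKne continuous_norm.continuousOn
  obtain ⟨g, hg, hx⟩ := Set.mem_iUnion₂.1 hxK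
  exact ⟨g, by simpa using hg, x, hx, fun g' hg' v hv =>
    isMinOn_iff.1 hmin v (Set.mem_biUnion (by simpa using hg') hv)⟩

theorem colorful_caratheodory_of_finrank_lt_card [FiniteDimensional ℝ E] {ι : Type*}
    [Fintype ι] (hcard : finrank ℝ E < Fintype.card ι) (C : ι → Finset E)
    (hC : ∀ i, (0 : E) ∈ convexHull ℝ (C i : Set E)) :
    ∃ g : ι → E, (∀ i, g i ∈ C i) ∧ (0 : E) ∈ convexHull ℝ (range g) := by
  classical
  have : Nonempty ι := Fintype.card_pos_iff.1 (by omega)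
  obtain ⟨g, hg, x, hx, hmin⟩ := exists_selection_forall_norm_le
    fun i => Finset.coe_nonempty.1 (convexHull_nonempty_iff.1 ⟨0, hC i⟩)
  refine ⟨g, hg, ?_⟩
  by_contra h0
  have hx0 : x ≠ 0 := by rintro rfl; exact h0 hx
  obtain ⟨t, hts, htcard, hxt⟩ := exists_card_le_finrank_of_forall_norm_le hx hx0 (hmin g hg)
  obtain ⟨i₀, hi₀⟩ := exists_forall_subset_range_update hts (htcard.trans_lt hcard)
  obtain ⟨c, hc, hxc⟩ := exists_apply_nonpos_of_zero_mem_convexHull (hC i₀) (innerₗ E x)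
  obtain ⟨v, hv, hvx⟩ := exists_mem_segment_norm_lt (x := x) (y := c)
    (hxc.trans_lt (pow_pos (norm_pos_iff.2 hx0) 2))
  have hg' : ∀ i, update g i₀ c i ∈ C i := by
    intro i
    rcases eq_or_ne i i₀ with rfl | hi
    · simpa using hc
    · simpa [hi] using hg i
  have hv' : v ∈ convexHull ℝ (range (update g i₀ c)) :=
    (convex_convexHull ℝ _).segment_subset (convexHull_mono (hi₀ c) hxt)
      (subset_convexHull ℝ _ ⟨i₀, update_self i₀ c g⟩) hv
  exact (hmin _ hg' v hv').not_gt hvx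

/-- Colorful Carathéodory theorem: if `0` lies in the convex hull of each of the
`d+1` color classes `C i`, then one can select one point from each class so that
`0` lies in the convex hull of the selection. -/
theorem colorful_caratheodory (d : ℕ)
    (C : Fin (d + 1) → Finset (EuclideanSpace ℝ (Fin d)))
    (hC : ∀ i, (0 : EuclideanSpace ℝ (Fin d)) ∈
      convexHull ℝ ((C i : Set (EuclideanSpace ℝ (Fin d))))) :
    ∃ g : Fin (d + 1) → EuclideanSpace ℝ (Fin d),
      (∀ i, g i ∈ C i) ∧
      (0 : EuclideanSpace ℝ (Fin d)) ∈ convexHull ℝ (Set.range g) :=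
  colorful_caratheodory_of_finrank_lt_card (by simp) C hC
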